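/- Let λ, v_i, v_{i'} ∈ ℝʳ and ρ, η > 0. The pair (c, c') minimizing η‖c - c'‖₂ + (ρ/2)‖a - c‖₂² + (ρ/2)‖b - c'‖₂² over (c, c') ∈ ℝʳ × ℝʳ is given by c = ω a + (1-ω) b and c' = (1-ω) a + ω b, where ω = max{1 - η/(ρ‖a - b‖₂), 1/2} (and c = c' = (a+b)/2 when a = b). -/

import Mathlib

/-!
Only the triangle inequality is needed, so the argument works in any real normed space. Put
`D = ‖a - b‖` and `t = ‖(a - c) - (b - c')‖`. Then `‖c - c'‖ ≥ D - t` and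
`‖a - c‖² + ‖b - c'‖² ≥ t² / 2`, so the objective is at least `η (D - t) + ρ t² / 4` (and at least
`ρ t² / 4`). This scalar function is minimised at `t = 2 min (η / ρ) (D / 2)`, which is exactly the
value of `t` at the candidate pair, since `(1 - ω) D = min (η / ρ) (D / 2)`.
-/

lemma fusion_scalar_le {ρ η D t N : ℝ} (hρ : 0 < ρ) (hη : 0 ≤ η) (hD : 0 ≤ D)
    (hN : D - t ≤ N) (hN₀ : 0 ≤ N) :
    η * (D - 2 * min (η / ρ) (D / 2)) + ρ * min (η / ρ) (D / 2) ^ 2 ≤ η * N + ρ * t ^ 2 / 4 := by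
  have hηN : η * (D - t) ≤ η * N := mul_le_mul_of_nonneg_left hN hη
  rcases min_cases (η / ρ) (D / 2) with ⟨hs, -⟩ | ⟨hs, hDη⟩
  · rw [hs]
    set s := η / ρ
    have hρs : ρ * s = η := mul_div_cancel₀ η hρ.ne'
    rw [← hρs] at hηN ⊢
    linear_combination hηN + mul_nonneg hρ.le (sq_nonneg (t / 2 - s))
  · rw [hs]
    have hρD : ρ * D ≤ 2 * η := by
      have := (lt_div_iff₀ hρ).1 hDη
      linarith
    rcases le_total t D with htD | hDt
    · nlinarith [mul_nonneg (sub_nonneg.2 htD) (sub_nonneg.2 hρD),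
        mul_nonneg hρ.le (mul_self_nonneg (D - t))]
    · nlinarith [mul_nonneg hη hN₀, pow_le_pow_left₀ hD hDt 2]

noncomputable def fusionWeight (ρ η D : ℝ) : ℝ := max (1 - η / (ρ * D)) (1 / 2)

section fusionWeight

variable {ρ η D : ℝ}

lemma half_le_fusionWeight : 1 / 2 ≤ fusionWeight ρ η D := le_max_right _ _

lemma fusionWeight_le_one (hρ : 0 ≤ ρ) (hη : 0 ≤ η) (hD : 0 ≤ D) : fusionWeight ρ η D ≤ 1 :=
  max_le (sub_le_self _ (by positivity)) (by norm_num)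

lemma one_sub_fusionWeight_mul (hρ : 0 < ρ) (hη : 0 ≤ η) (hD : 0 ≤ D) :
    (1 - fusionWeight ρ η D) * D = min (η / ρ) (D / 2) := by
  rcases hD.eq_or_lt with rfl | hD
  -- at `D = 0` the junk value `η / 0 = 0` makes the weight `1`
  · simp [div_nonneg hη hρ.le]
  · rw [fusionWeight, ← min_sub_sub_left, min_mul_of_nonneg _ _ hD.le]
    congr 1 <;> field_simp <;> ring

end fusionWeight

section NormedSpace

variable {E : Type*} [SeminormedAddCommGroup E] [NormedSpace ℝ E]

noncomputable def fusionObjective (ρ η : ℝ) (a b c c' : E) : ℝ :=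
  η * ‖c - c'‖ + (ρ / 2) * ‖a - c‖ ^ 2 + (ρ / 2) * ‖b - c'‖ ^ 2

lemma fusionObjective_weighted (ρ η : ℝ) (a b : E) {ω : ℝ} (h₁ : 1 / 2 ≤ ω) (h₂ : ω ≤ 1) :
    fusionObjective ρ η a b (ω • a + (1 - ω) • b) ((1 - ω) • a + ω • b) =
      η * (‖a - b‖ - 2 * ((1 - ω) * ‖a - b‖)) + ρ * ((1 - ω) * ‖a - b‖) ^ 2 := by
  have e₁ : (ω • a + (1 - ω) • b) - ((1 - ω) • a + ω • b) = (2 * ω - 1) • (a - b) := by module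
  have e₂ : a - (ω • a + (1 - ω) • b) = (1 - ω) • (a - b) := by module
  have e₃ : b - ((1 - ω) • a + ω • b) = (1 - ω) • (b - a) := by module
  rw [fusionObjective, e₁, e₂, e₃, norm_smul, norm_smul, norm_smul, norm_sub_rev b,
    Real.norm_of_nonneg (by linarith), Real.norm_of_nonneg (by linarith)]
  ring

theorem fusionObjective_fusionWeight_le {ρ η : ℝ} (hρ : 0 < ρ) (hη : 0 ≤ η) (a b c c' : E)
    {ω : ℝ} (hω : ω = fusionWeight ρ η ‖a - b‖) :
    fusionObjective ρ η a b (ω • a + (1 - ω) • b) ((1 - ω) • a + ω • b) ≤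
      fusionObjective ρ η a b c c' := by
  have hD := norm_nonneg (a - b)
  rw [fusionObjective_weighted ρ η a b (hω ▸ half_le_fusionWeight)
    (hω ▸ fusionWeight_le_one hρ.le hη hD), hω, one_sub_fusionWeight_mul hρ hη hD]
  set t := ‖(a - c) - (b - c')‖
  have hN : ‖a - b‖ - t ≤ ‖c - c'‖ := by
    have : a - b = (c - c') + ((a - c) - (b - c')) := by abel
    linarith [this ▸ norm_add_le (c - c') ((a - c) - (b - c'))]
  have ht : t ^ 2 ≤ 2 * (‖a - c‖ ^ 2 + ‖b - c'‖ ^ 2) :=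
    (pow_le_pow_left₀ (norm_nonneg _) (norm_sub_le _ _) 2).trans add_sq_le
  have := fusion_scalar_le (t := t) hρ hη hD hN (norm_nonneg _)
  rw [fusionObjective]
  linarith [mul_le_mul_of_nonneg_left ht (by positivity : (0 : ℝ) ≤ ρ / 4)]

end NormedSpace

theorem stmt_11 (r : ℕ) (a b : EuclideanSpace ℝ (Fin r)) (ρ η : ℝ)
    (hρ : 0 < ρ) (hη : 0 < η)
    (ω : ℝ) (hω : ω = max (1 - η / (ρ * ‖a - b‖)) (1 / 2)) :
    ∀ c c' : EuclideanSpace ℝ (Fin r),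
      η * ‖(ω • a + (1 - ω) • b) - ((1 - ω) • a + ω • b)‖
          + (ρ / 2) * ‖a - (ω • a + (1 - ω) • b)‖ ^ 2
          + (ρ / 2) * ‖b - ((1 - ω) • a + ω • b)‖ ^ 2
        ≤ η * ‖c - c'‖ + (ρ / 2) * ‖a - c‖ ^ 2 + (ρ / 2) * ‖b - c'‖ ^ 2 :=
  fun c c' => fusionObjective_fusionWeight_le hρ hη.le a b c c' hω
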